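/- The sequence (A_m)_{m∈ℕ} admits a polynomial contraction with respect to the sequence of norms ‖·‖_m if and only if: there exist M, a > 0 with ‖A(m,n)x‖_m ≤ M(m/n)^a‖x‖_n for all m ≥ n and x ∈ X, and for each y = (y_n) ∈ Y_0, the sequence x_n = Σ_{k=1}^n (1/k) A(n,k) y_k belongs to Y_0 (i.e., is bounded in the norms ‖·‖_n and has x_1 = 0). -/

import Mathlib

open scoped BigOperators

variable {X : Type*} [NormedAddCommGroup X] [NormedSpace ℝ X]

/-- The cocycle generated by a sequence of bounded operators:
`coc A n m = 𝓐(m,n) = A_{m-1} ⋯ A_n` for `m > n`, and `= Id` for `m ≤ n`. -/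
def coc (A : ℕ → X →L[ℝ] X) (n : ℕ) : ℕ → X →L[ℝ] X
  | 0 => 1
  | m + 1 => if n ≤ m then (A m).comp (coc A n m) else 1

/-- The formal difference operator: `(T x)_1 = 0` and
`(T x)_{m+1} = (m+1)(x_{m+1} - A_m x_m)` for `m ≥ 1`. -/
noncomputable def TOp (A : ℕ → X →L[ℝ] X) (x : ℕ → X) : ℕ → X :=
  fun m => if m ≤ 1 then 0 else (m : ℝ) • (x m - A (m - 1) (x (m - 1)))

/-- `N` is a family (indexed by `m ≥ 1`) of norms on `X`, each equivalent to `‖·‖`. -/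
def NormFamily (N : ℕ → X → ℝ) : Prop :=
  ∀ m, 1 ≤ m →
    (∀ x y : X, N m (x + y) ≤ N m x + N m y) ∧
    (∀ (c : ℝ) (x : X), N m (c • x) = |c| * N m x) ∧
    (∃ c C : ℝ, 0 < c ∧ ∀ x : X, c * ‖x‖ ≤ N m x ∧ N m x ≤ C * ‖x‖)

/-- Membership in `Y`: `sup_{m ≥ 1} ‖x_m‖_m < ∞`. -/
def MemY (N : ℕ → X → ℝ) (x : ℕ → X) : Prop :=
  ∃ S : ℝ, ∀ m, 1 ≤ m → N m (x m) ≤ S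

/-- Membership in `Y₀ = Y_{{0}}`: bounded and `x_1 = 0`. -/
def MemY0 (N : ℕ → X → ℝ) (x : ℕ → X) : Prop := x 1 = 0 ∧ MemY N x

/-- Membership in `Y_Z`: bounded and `x_1 ∈ Z`. -/
def MemYZ (N : ℕ → X → ℝ) (Z : Set X) (x : ℕ → X) : Prop := x 1 ∈ Z ∧ MemY N x

/-- Membership in the domain `𝒟(T_Z)`: `x ∈ Y_Z` and
`sup_{m ≥ 1} (m+1)‖x_{m+1} - A_m x_m‖_{m+1} < ∞`. -/
def MemD (A : ℕ → X →L[ℝ] X) (N : ℕ → X → ℝ) (Z : Set X) (x : ℕ → X) : Prop :=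
  MemYZ N Z x ∧ MemY N (TOp A x)

/-- Polynomial dichotomy (with given projections and constants) with respect to the
sequence of norms `N`.  The bound along the unstable direction is stated in the
equivalent "forward" form: `‖u‖_m ≤ D (m/n)^λ ‖𝓐(n,m)u‖_n` for `u ∈ Ker P_m`, `m ≤ n`. -/
def PolyDichWith (A : ℕ → X →L[ℝ] X) (N : ℕ → X → ℝ) (P : ℕ → X →L[ℝ] X)
    (D lam : ℝ) : Prop :=
  (∀ m, 1 ≤ m → (P m).comp (P m) = P m) ∧
  (∀ m, 1 ≤ m → (A m).comp (P m) = (P (m + 1)).comp (A m)) ∧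
  (∀ m, 1 ≤ m → ∀ y, P (m + 1) y = 0 → ∃! x, P m x = 0 ∧ A m x = y) ∧
  (∀ m n, 1 ≤ n → n ≤ m → ∀ x : X,
      N m (coc A n m (P n x)) ≤ D * (((m : ℝ) / (n : ℝ)) ^ (-lam)) * N n x) ∧
  (∀ m n, 1 ≤ m → m ≤ n → ∀ u : X, P m u = 0 →
      N m u ≤ D * (((m : ℝ) / (n : ℝ)) ^ lam) * N n (coc A m n u))

/-- `(A_m)` admits a polynomial dichotomy with respect to the sequence of norms `N`. -/
def PolyDich (A : ℕ → X →L[ℝ] X) (N : ℕ → X → ℝ) : Prop :=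
  ∃ (P : ℕ → X →L[ℝ] X) (D lam : ℝ), 0 < D ∧ 0 < lam ∧ PolyDichWith A N P D lam

/-- The stable space `X(n) = {x : sup_{m ≥ n} ‖𝓐(m,n)x‖_m < ∞}`. -/
def Xs (A : ℕ → X →L[ℝ] X) (N : ℕ → X → ℝ) (n : ℕ) : Set X :=
  {x : X | ∃ S : ℝ, ∀ m, n ≤ m → N m (coc A n m x) ≤ S}

/-- The unstable space `Z(n) = 𝓐(n,1) Z`. -/
def Zs (A : ℕ → X →L[ℝ] X) (Z : Set X) (n : ℕ) : Set X := coc A 1 n '' Z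

/-- `T_Z : 𝒟(T_Z) → Y₀` is invertible, with `κ` a bound for the norm of its inverse
(with respect to the graph norm on the domain). -/
def TInv (A : ℕ → X →L[ℝ] X) (N : ℕ → X → ℝ) (Z : Set X) (κ : ℝ) : Prop :=
  (∀ y, MemY0 N y → ∃ x, MemD A N Z x ∧ ∀ m, 1 ≤ m → TOp A x m = y m) ∧
  (∀ x x', MemD A N Z x → MemD A N Z x' →
      (∀ m, 1 ≤ m → TOp A x m = TOp A x' m) → ∀ m, 1 ≤ m → x m = x' m) ∧
  (∀ y x, MemY0 N y → MemD A N Z x → (∀ m, 1 ≤ m → TOp A x m = y m) →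
      ∀ S : ℝ, (∀ m, 1 ≤ m → N m (y m) ≤ S) → ∀ m, 1 ≤ m → N m (x m) ≤ κ * S)

/-- The uniform polynomial growth bound `‖𝓐(m,n)x‖_m ≤ M (m/n)^a ‖x‖_n` for `m ≥ n`. -/
def Grow (A : ℕ → X →L[ℝ] X) (N : ℕ → X → ℝ) (M a : ℝ) : Prop :=
  ∀ m n, 1 ≤ n → n ≤ m → ∀ x : X,
    N m (coc A n m x) ≤ M * (((m : ℝ) / (n : ℝ)) ^ a) * N n x

/-!
If the cocycle contracts, `x_n` is dominated by `∑_{k ≤ n} k⁻¹ (n/k)^{-λ}`, which is at most `1/λ`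
when `λ ≤ 1`.

Conversely, admissibility makes `y ↦ x` an everywhere defined linear map on the Banach space
`ℓ^∞` of sequences measured in the norms `‖·‖_m`. Its graph is closed, so it is bounded, by `κ`
say. The test inputs `y_k = φ_k 𝓐(k,n) v` for `k > n` have output
`x_m = (∑_{n<k≤m} φ_k / k) 𝓐(m,n) v`. With `φ_k = (n/k)^a` the growth bound shows that `𝓐` is
uniformly bounded, by `C`; then `φ_k = 1` gives `(j/2) ‖𝓐(m,n) v‖_m ≤ κ C ‖v‖_n` for
`m ≥ 2^j n`. Hence `𝓐` halves norms over every ratio `r = 2^J` with `J ≥ 4κC`, and iterating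
this gives the decay `(m/n)^{-log_r 2}`.
-/

open Finset
open scoped ENNReal

section Cocycle

variable (A : ℕ → X →L[ℝ] X)

lemma coc_succ {n m : ℕ} (h : n ≤ m) : coc A n (m + 1) = (A m).comp (coc A n m) := by
  simp [coc, h]

lemma coc_self (n : ℕ) : coc A n n = 1 := by
  cases n with
  | zero => rfl
  | succ n => simp [coc]

lemma coc_apply_coc {n k m : ℕ} (hnk : n ≤ k) (hkm : k ≤ m) (x : X) :
    coc A k m (coc A n k x) = coc A n m x := by
  induction m, hkm using Nat.le_induction with
  | base => simp [coc_self]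
  | succ m hkm ih => simp [coc_succ A (hnk.trans hkm), coc_succ A hkm, ih]

end Cocycle

namespace NormFamily

variable {N : ℕ → X → ℝ} {m : ℕ}

lemma nonneg (hN : NormFamily N) (hm : 1 ≤ m) (x : X) : 0 ≤ N m x := by
  obtain ⟨c, C, hc, h⟩ := (hN m hm).2.2
  exact (mul_nonneg hc.le (norm_nonneg x)).trans (h x).1

lemma map_zero (hN : NormFamily N) (hm : 1 ≤ m) : N m 0 = 0 := by
  simpa using (hN m hm).2.1 0 0

lemma eq_zero_of_apply_eq_zero (hN : NormFamily N) (hm : 1 ≤ m) {x : X} (h : N m x = 0) :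
    x = 0 := by
  obtain ⟨c, C, hc, hb⟩ := (hN m hm).2.2
  have hx : c * ‖x‖ ≤ 0 := h ▸ (hb x).1
  exact norm_le_zero_iff.mp (nonpos_of_mul_nonpos_right hx hc)

lemma apply_smul_of_nonneg (hN : NormFamily N) (hm : 1 ≤ m) {c : ℝ} (hc : 0 ≤ c) (x : X) :
    N m (c • x) = c * N m x := by
  rw [(hN m hm).2.1, abs_of_nonneg hc]

lemma apply_sum_le (hN : NormFamily N) (hm : 1 ≤ m) {ι : Type*} (s : Finset ι) (f : ι → X) :
    N m (∑ i ∈ s, f i) ≤ ∑ i ∈ s, N m (f i) := by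
  classical
  induction s using Finset.induction with
  | empty => simp [hN.map_zero hm]
  | insert i s hi ih =>
    rw [sum_insert hi, sum_insert hi]
    exact ((hN m hm).1 _ _).trans (add_le_add le_rfl ih)

end NormFamily

open Real in
lemma mul_rpow_sub_one_le_rpow_sub_rpow {l x : ℝ} (hl0 : 0 < l) (hl1 : l ≤ 1) (hx : 1 ≤ x) :
    l * x ^ (l - 1) ≤ x ^ l - (x - 1) ^ l := by
  have hx0 : 0 < x := one_pos.trans_le hx
  have hs : -1 ≤ -x⁻¹ := neg_le_neg (inv_le_one_of_one_le₀ hx)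
  have hsplit : (x - 1) ^ l = (1 + -x⁻¹) ^ l * x ^ l := by
    rw [← mul_rpow (by linarith) hx0.le]
    congr 1
    field_simp
    ring
  have hpow : x ^ (l - 1) = x⁻¹ * x ^ l := by
    rw [rpow_sub_one hx0.ne']
    ring
  have hbern := rpow_one_add_le_one_add_mul_self hs hl0.le hl1
  have := mul_le_mul_of_nonneg_right hbern (rpow_nonneg hx0.le l)
  rw [hsplit, hpow]
  linarith

lemma sum_Icc_rpow_sub_one_le {l : ℝ} (hl0 : 0 < l) (hl1 : l ≤ 1) (n : ℕ) :
    ∑ k ∈ Icc 1 n, (k : ℝ) ^ (l - 1) ≤ (n : ℝ) ^ l / l := by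
  induction n with
  | zero => simp [Real.zero_rpow hl0.ne']
  | succ n ih =>
    rw [sum_Icc_succ_top (by omega), le_div_iff₀ hl0]
    rw [le_div_iff₀ hl0] at ih
    have h := mul_rpow_sub_one_le_rpow_sub_rpow hl0 hl1 (x := (n + 1 : ℕ))
      (by exact_mod_cast Nat.succ_pos n)
    push_cast at h ⊢
    rw [add_sub_cancel_right] at h
    linarith

lemma sum_Icc_inv_mul_div_rpow_neg_le {l : ℝ} (hl0 : 0 < l) (hl1 : l ≤ 1) (n : ℕ) :
    ∑ k ∈ Icc 1 n, (k : ℝ)⁻¹ * ((n : ℝ) / k) ^ (-l) ≤ l⁻¹ := by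
  rcases n.eq_zero_or_pos with rfl | hn
  · simp [hl0.le]
  have hn0 : (0 : ℝ) < n := by exact_mod_cast hn
  have hterm : ∀ k ∈ Icc 1 n, (k : ℝ)⁻¹ * ((n : ℝ) / k) ^ (-l) = (k : ℝ) ^ (l - 1) / n ^ l := by
    intro k hk
    have hk0 : (0 : ℝ) < k := by exact_mod_cast (mem_Icc.mp hk).1
    rw [Real.rpow_neg (by positivity), Real.div_rpow hn0.le hk0.le, Real.rpow_sub_one hk0.ne']
    field_simp
  rw [sum_congr rfl hterm, ← sum_div, div_le_iff₀ (by positivity)]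
  calc ∑ k ∈ Icc 1 n, (k : ℝ) ^ (l - 1) ≤ (n : ℝ) ^ l / l := sum_Icc_rpow_sub_one_le hl0 hl1 n
    _ = l⁻¹ * n ^ l := by ring

lemma one_le_natCast_div {n m : ℕ} (hn : 1 ≤ n) (hnm : n ≤ m) : (1 : ℝ) ≤ m / n := by
  rw [one_le_div (by exact_mod_cast hn)]
  exact_mod_cast hnm

lemma inv_two_mul_rpow_le_sum_Ioc {a : ℝ} (ha : 0 ≤ a) {n : ℕ} (hn : 1 ≤ n) :
    (2 * 2 ^ a)⁻¹ ≤ ∑ k ∈ Ioc n (2 * n), (k : ℝ)⁻¹ * ((n : ℝ) / k) ^ a := by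
  have hn0 : (0 : ℝ) < n := by exact_mod_cast hn
  have hterm : ∀ k ∈ Ioc n (2 * n), (2 * n * 2 ^ a : ℝ)⁻¹ ≤ (k : ℝ)⁻¹ * ((n : ℝ) / k) ^ a := by
    intro k hk
    obtain ⟨hnk, hk2⟩ := mem_Ioc.mp hk
    have hk0 : (0 : ℝ) < k := Nat.cast_pos.mpr (by omega)
    have hk2' : (k : ℝ) ≤ 2 * n := by exact_mod_cast hk2
    have hhalf : (2 : ℝ)⁻¹ ≤ n / k := by
      rw [le_div_iff₀ hk0]
      linarith
    rw [mul_inv, ← Real.inv_rpow zero_le_two]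
    gcongr
  have := card_nsmul_le_sum _ _ _ hterm
  rw [Nat.card_Ioc, show 2 * n - n = n by omega, nsmul_eq_mul] at this
  calc (2 * (2 : ℝ) ^ a)⁻¹ = n * (2 * n * 2 ^ a : ℝ)⁻¹ := by field_simp
    _ ≤ _ := this

lemma natCast_div_two_le_sum_Ioc_inv {n : ℕ} (hn : 1 ≤ n) (j : ℕ) :
    (j : ℝ) / 2 ≤ ∑ k ∈ Ioc n (2 ^ j * n), (k : ℝ)⁻¹ := by
  induction j with
  | zero => simp
  | succ j ih =>
    have hj : 1 ≤ 2 ^ j * n := one_le_mul (Nat.one_le_two_pow) hn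
    have hhalf := inv_two_mul_rpow_le_sum_Ioc le_rfl hj
    simp only [Real.rpow_zero, mul_one] at hhalf
    rw [show 2 ^ (j + 1) * n = 2 * (2 ^ j * n) by ring,
      ← sum_Ioc_consecutive _ (Nat.le_mul_of_pos_left n (Nat.two_pow_pos j)) (by omega)]
    push_cast
    linarith

-- `r ^ logb r 2 = 2`, and `j = ⌊logb r q⌋₊` satisfies `r ^ j ≤ q < r ^ (j + 1)`.
open Real in
lemma le_two_mul_rpow_neg_logb {r q B C : ℝ} (hr : 1 < r) (hq : 1 ≤ q) (hC : 0 ≤ C)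
    (h : ∀ j : ℕ, r ^ j ≤ q → B ≤ C * 2⁻¹ ^ j) : B ≤ 2 * C * q ^ (-logb r 2) := by
  have hr0 : 0 < r := one_pos.trans hr
  set t := logb r q
  set j := ⌊t⌋₊
  have ht : 0 ≤ t := logb_nonneg hr hq
  have hq_eq : r ^ t = q := rpow_logb hr0 hr.ne' (one_pos.trans_le hq)
  have hj : r ^ j ≤ q := by
    rw [← rpow_natCast, ← hq_eq]
    exact rpow_le_rpow_of_exponent_le hr.le (Nat.floor_le ht)
  have hpow : q ^ (-logb r 2) = 2 ^ (-t) := by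
    rw [← hq_eq, ← rpow_mul hr0.le, show t * -logb r 2 = logb r 2 * -t by ring, rpow_mul hr0.le,
      rpow_logb hr0 hr.ne' two_pos]
  have hhalf : (2⁻¹ : ℝ) ^ j ≤ 2 * 2 ^ (-t) := by
    have h2 : (2 : ℝ) * 2 ^ (-t) = 2 ^ (1 - t) := by
      rw [rpow_sub two_pos, rpow_one, rpow_neg zero_le_two]
      ring
    rw [h2, inv_pow, ← rpow_natCast, ← rpow_neg zero_le_two]
    exact rpow_le_rpow_of_exponent_le one_le_two (by linarith [Nat.lt_floor_add_one t])
  calc B ≤ C * 2⁻¹ ^ j := h j hj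
    _ ≤ C * (2 * 2 ^ (-t)) := by gcongr
    _ = 2 * C * q ^ (-logb r 2) := by rw [hpow]; ring

-- The sequence `x` of the statement; when `y 1 = 0` it solves `TOp A x = y` with `x 1 = 0`.
noncomputable def perronSum (A : ℕ → X →L[ℝ] X) (y : ℕ → X) (n : ℕ) : X :=
  ∑ k ∈ Icc 1 n, (k : ℝ)⁻¹ • coc A k n (y k)

section PerronSum

variable (A : ℕ → X →L[ℝ] X)

lemma perronSum_add (y z : ℕ → X) : perronSum A (y + z) = perronSum A y + perronSum A z := by
  ext n
  simp [perronSum, sum_add_distrib]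

lemma perronSum_smul (c : ℝ) (y : ℕ → X) : perronSum A (c • y) = c • perronSum A y := by
  ext n
  simp [perronSum, smul_sum, smul_comm c]

lemma perronSum_congr {y z : ℕ → X} (h : ∀ k, 1 ≤ k → y k = z k) (n : ℕ) :
    perronSum A y n = perronSum A z n :=
  sum_congr rfl fun k hk => by rw [h k (mem_Icc.mp hk).1]

lemma continuous_perronSum (n : ℕ) : Continuous fun y : ℕ → X => perronSum A y n := by
  unfold perronSum
  fun_prop

lemma perronSum_ite_smul_coc (n m : ℕ) (φ : ℕ → ℝ) (v : X) :
    perronSum A (fun k => if n < k then φ k • coc A n k v else 0) m =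
      (∑ k ∈ Ioc n m, (k : ℝ)⁻¹ * φ k) • coc A n m v := by
  have hfilter : (Icc 1 m).filter (n < ·) = Ioc n m := by
    ext k
    simp only [mem_filter, mem_Icc, mem_Ioc]
    omega
  rw [sum_smul, ← hfilter, sum_filter, perronSum]
  refine sum_congr rfl fun k hk => ?_
  split_ifs with h
  · rw [map_smul, coc_apply_coc A h.le (mem_Icc.mp hk).2, smul_smul]
  · simp

end PerronSum

section Growth

variable {A : ℕ → X →L[ℝ] X} {N : ℕ → X → ℝ}

lemma Grow.exponent_mono {M a b : ℝ} (h : Grow A N M a) (hN : NormFamily N) (hM : 0 ≤ M)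
    (hab : a ≤ b) : Grow A N M b := fun m n hn hnm x =>
  (h m n hn hnm x).trans <| by
    have := hN.nonneg hn x
    have := one_le_natCast_div hn hnm
    gcongr

theorem memY0_perronSum_of_grow {D l : ℝ} (hN : NormFamily N) (hD : 0 ≤ D) (hl0 : 0 < l)
    (hl1 : l ≤ 1) (h : Grow A N D (-l)) {y : ℕ → X} (hy : MemY0 N y) :
    MemY0 N (perronSum A y) := by
  obtain ⟨hy1, S, hS⟩ := hy
  have hS0 : 0 ≤ S := hN.map_zero le_rfl ▸ hy1 ▸ hS 1 le_rfl
  refine ⟨by simp [perronSum, hy1], l⁻¹ * (D * S), fun n hn => ?_⟩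
  calc N n (perronSum A y n)
      ≤ ∑ k ∈ Icc 1 n, N n ((k : ℝ)⁻¹ • coc A k n (y k)) := hN.apply_sum_le hn _ _
    _ ≤ ∑ k ∈ Icc 1 n, (k : ℝ)⁻¹ * ((n : ℝ) / k) ^ (-l) * (D * S) := by
      refine sum_le_sum fun k hk => ?_
      obtain ⟨hk1, hkn⟩ := mem_Icc.mp hk
      rw [hN.apply_smul_of_nonneg hn (by positivity)]
      have hyk := (h n k hk1 hkn (y k)).trans
        (mul_le_mul_of_nonneg_left (hS k hk1) (by positivity))
      calc (k : ℝ)⁻¹ * N n (coc A k n (y k))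
          ≤ (k : ℝ)⁻¹ * (D * ((n : ℝ) / k) ^ (-l) * S) := by gcongr
        _ = (k : ℝ)⁻¹ * ((n : ℝ) / k) ^ (-l) * (D * S) := by ring
    _ = (∑ k ∈ Icc 1 n, (k : ℝ)⁻¹ * ((n : ℝ) / k) ^ (-l)) * (D * S) := (sum_mul ..).symm
    _ ≤ l⁻¹ * (D * S) := by
      gcongr
      exact sum_Icc_inv_mul_div_rpow_neg_le hl0 hl1 n

end Growth

def PerronBounded (A : ℕ → X →L[ℝ] X) (N : ℕ → X → ℝ) (κ : ℝ) : Prop :=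
  ∀ y : ℕ → X, y 1 = 0 → ∀ S, (∀ m, 1 ≤ m → N m (y m) ≤ S) →
    ∀ n, 1 ≤ n → N n (perronSum A y n) ≤ κ * S

-- Indexed by `ℕ+` because `N m` is only known to be a norm for `1 ≤ m`.
def Renormed (_N : ℕ → X → ℝ) (_m : ℕ+) : Type _ := X

namespace Renormed

variable {N : ℕ → X → ℝ} {m : ℕ+}

instance : AddCommGroup (Renormed N m) := inferInstanceAs (AddCommGroup X)
instance : Module ℝ (Renormed N m) := inferInstanceAs (Module ℝ X)
instance : Norm (Renormed N m) := ⟨N m⟩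

variable [hN : Fact (NormFamily N)]

lemma normedSpaceCore : NormedSpace.Core ℝ (Renormed N m) where
  norm_nonneg := hN.out.nonneg m.pos
  norm_smul c x := (hN.out m m.pos).2.1 c x
  norm_triangle := (hN.out m m.pos).1
  norm_eq_zero_iff _ := ⟨hN.out.eq_zero_of_apply_eq_zero m.pos, fun h => h ▸ hN.out.map_zero m.pos⟩

noncomputable instance : NormedAddCommGroup (Renormed N m) := .ofCore normedSpaceCore
noncomputable instance : NormedSpace ℝ (Renormed N m) := .ofCore normedSpaceCore

noncomputable def equiv (m : ℕ+) : X ≃L[ℝ] Renormed N m :=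
  have hb := (hN.out m m.pos).2.2
  LinearEquiv.toContinuousLinearEquivOfBounds (F := Renormed N m) (LinearEquiv.refl ℝ X)
    hb.choose_spec.choose hb.choose⁻¹
    (fun x => (hb.choose_spec.choose_spec.2 x).2)
    (fun x => by
      obtain ⟨hc, h⟩ := hb.choose_spec.choose_spec
      rw [inv_mul_eq_div, le_div_iff₀ hc, mul_comm]
      exact (h x).1)

lemma norm_equiv_symm (x : Renormed N m) : N m ((equiv m).symm x) = ‖x‖ := rfl

instance [CompleteSpace X] : CompleteSpace (Renormed N m) :=
  (completeSpace_congr (e := (equiv m).toEquiv) (equiv m).isUniformEmbedding).mp inferInstance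

-- Coordinate `1` is dropped so that `y ↦ x` is defined on all of `ℓ^∞`.
noncomputable def toSeq : lp (Renormed N) ∞ →L[ℝ] ℕ → X :=
  ContinuousLinearMap.pi fun m =>
    if h : 1 < m then
      (equiv (m.toPNat (Nat.zero_lt_of_lt h))).symm.toContinuousLinearMap ∘L
        lp.evalCLM ℝ (Renormed N) ∞ (m.toPNat (Nat.zero_lt_of_lt h))
    else 0

lemma toSeq_apply_of_lt {m : ℕ} (h : 1 < m) (y : lp (Renormed N) ∞) :
    toSeq y m = (equiv (N := N) (m.toPNat (Nat.zero_lt_of_lt h))).symm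
      (y (m.toPNat (Nat.zero_lt_of_lt h))) := by
  simp only [toSeq, ContinuousLinearMap.coe_pi', dif_pos h]
  rfl

lemma memY0_toSeq (y : lp (Renormed N) ∞) : MemY0 N (toSeq y) := by
  refine ⟨by simp [toSeq], ‖y‖, fun m hm => ?_⟩
  rcases hm.eq_or_lt with rfl | hm
  · simp [toSeq, hN.out.map_zero le_rfl]
  · rw [toSeq_apply_of_lt hm]
    exact (norm_equiv_symm (m := m.toPNat _) _).trans_le
      (lp.norm_apply_le_norm ENNReal.top_ne_zero y _)

variable {A : ℕ → X →L[ℝ] X} (hAdm : ∀ y, MemY0 N y → MemY0 N (perronSum A y))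

noncomputable def perronOp : lp (Renormed N) ∞ →ₗ[ℝ] lp (Renormed N) ∞ where
  toFun y := ⟨fun n => equiv n (perronSum A (toSeq y) n), memℓp_infty <| by
    obtain ⟨S, hS⟩ := (hAdm _ (memY0_toSeq y)).2
    exact ⟨S, by rintro _ ⟨n, rfl⟩; exact hS n n.pos⟩⟩
  map_add' y z := by
    ext n
    simp only [map_add, perronSum_add, Pi.add_apply, AddSubgroup.coe_add]
    rfl
  map_smul' c y := by
    ext n
    simp [perronSum_smul]

lemma continuous_perronOp [CompleteSpace X] : Continuous (perronOp hAdm) := by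
  refine (perronOp hAdm).continuous_of_seq_closed_graph fun u y z hu hTu => ?_
  ext n
  have h₁ := ((lp.evalCLM ℝ (Renormed N) ∞ n).continuous.tendsto z).comp hTu
  have h₂ := (((equiv (N := N) n).continuous.comp
    ((continuous_perronSum A n).comp toSeq.continuous)).tendsto y).comp hu
  exact tendsto_nhds_unique h₁ h₂

end Renormed

open Renormed in
theorem exists_perronBounded [CompleteSpace X] {A : ℕ → X →L[ℝ] X} {N : ℕ → X → ℝ}
    (hN : NormFamily N) (hAdm : ∀ y, MemY0 N y → MemY0 N (perronSum A y)) :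
    ∃ κ, 0 ≤ κ ∧ PerronBounded A N κ := by
  have : Fact (NormFamily N) := ⟨hN⟩
  let T : lp (Renormed N) ∞ →L[ℝ] lp (Renormed N) ∞ := ⟨perronOp hAdm, continuous_perronOp hAdm⟩
  refine ⟨‖T‖, norm_nonneg _, fun y hy1 S hS n hn => ?_⟩
  have hS0 : 0 ≤ S := hN.map_zero le_rfl ▸ hy1 ▸ hS 1 le_rfl
  let ŷ : lp (Renormed N) ∞ := ⟨fun m => equiv m (y m), memℓp_infty ⟨S, by
    rintro _ ⟨m, rfl⟩; exact hS m m.pos⟩⟩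
  have hŷ : ‖ŷ‖ ≤ S := lp.norm_le_of_forall_le hS0 fun m => hS m m.pos
  have hseq : perronSum A (toSeq ŷ) n = perronSum A y n := by
    refine perronSum_congr A (fun k hk => ?_) n
    rcases hk.eq_or_lt with rfl | hk
    · simp [toSeq, hy1]
    · rw [toSeq_apply_of_lt hk]
      exact (equiv _).symm_apply_apply _
  calc N n (perronSum A y n) = ‖T ŷ (n.toPNat hn)‖ := by rw [← hseq]; rfl
    _ ≤ ‖T ŷ‖ := lp.norm_apply_le_norm ENNReal.top_ne_zero _ _
    _ ≤ ‖T‖ * ‖ŷ‖ := T.le_opNorm ŷ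
    _ ≤ ‖T‖ * S := by gcongr

def CocBound (A : ℕ → X →L[ℝ] X) (N : ℕ → X → ℝ) (r : ℕ) (b : ℝ) : Prop :=
  ∀ n m, 1 ≤ n → r * n ≤ m → ∀ v, N m (coc A n m v) ≤ b * N n v

section Decay

variable {A : ℕ → X →L[ℝ] X} {N : ℕ → X → ℝ}

lemma CocBound.comp {r s : ℕ} {b₁ b₂ : ℝ} (h₁ : CocBound A N r b₁) (h₂ : CocBound A N s b₂)
    (hr : 1 ≤ r) (hs : 1 ≤ s) (hb₂ : 0 ≤ b₂) : CocBound A N (s * r) (b₂ * b₁) := by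
  intro n m hn hm v
  have hnk : n ≤ r * n := Nat.le_mul_of_pos_left n hr
  have hkm : s * (r * n) ≤ m := by rwa [← mul_assoc]
  rw [← coc_apply_coc A hnk ((Nat.le_mul_of_pos_left _ hs).trans hkm)]
  calc N m (coc A (r * n) m (coc A n (r * n) v))
      ≤ b₂ * N (r * n) (coc A n (r * n) v) := h₂ _ m (hn.trans hnk) hkm _
    _ ≤ b₂ * (b₁ * N n v) := by gcongr; exact h₁ n _ hn le_rfl v
    _ = b₂ * b₁ * N n v := by ring

lemma CocBound.pow {r : ℕ} {C : ℝ} (hC : CocBound A N 1 C) (hC0 : 0 ≤ C)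
    (hhalf : CocBound A N r 2⁻¹) (hr : 1 ≤ r) (j : ℕ) : CocBound A N (r ^ j) (C * 2⁻¹ ^ j) := by
  induction j with
  | zero => simpa using hC
  | succ j ih =>
    rw [pow_succ, pow_succ, ← mul_assoc]
    exact hhalf.comp ih hr (Nat.one_le_pow _ _ hr) (by positivity)

variable {κ : ℝ}

lemma PerronBounded.sum_mul_le (hP : PerronBounded A N κ) (hN : NormFamily N) {n m : ℕ}
    (hn : 1 ≤ n) (hnm : n ≤ m) {φ : ℕ → ℝ} (hφ : ∀ k, 0 ≤ φ k) {v : X} {S : ℝ}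
    (hS : ∀ k, n < k → N k (φ k • coc A n k v) ≤ S) :
    (∑ k ∈ Ioc n m, (k : ℝ)⁻¹ * φ k) * N m (coc A n m v) ≤ κ * S := by
  have hS0 : 0 ≤ S := (hN.nonneg (by omega) _).trans (hS (n + 1) (by omega))
  have h := hP (fun k => if n < k then φ k • coc A n k v else 0) (if_neg (by omega)) S
    (fun k hk => by
      split_ifs with h
      · exact hS k h
      · rwa [hN.map_zero hk]) m (hn.trans hnm)
  have hcoef : 0 ≤ ∑ k ∈ Ioc n m, (k : ℝ)⁻¹ * φ k := sum_nonneg fun k _ => by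
    have := hφ k
    positivity
  rwa [perronSum_ite_smul_coc, hN.apply_smul_of_nonneg (hn.trans hnm) hcoef] at h

lemma PerronBounded.cocBound_one (hP : PerronBounded A N κ) (hN : NormFamily N) (hκ : 0 ≤ κ)
    {M a : ℝ} (hM : 0 ≤ M) (ha : 0 ≤ a) (hG : Grow A N M a) :
    CocBound A N 1 (2 ^ a * M * (1 + 2 * κ)) := by
  intro n m hn hnm v
  rw [one_mul] at hnm
  have hn0 : (0 : ℝ) < n := by exact_mod_cast hn
  have hv := hN.nonneg hn v
  have h2a : (0 : ℝ) < 2 ^ a := by positivity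
  rcases le_or_gt m (2 * n) with hm | hm
  · have hmn : (m : ℝ) / n ≤ 2 := by
      rw [div_le_iff₀ hn0]
      exact_mod_cast hm
    calc N m (coc A n m v) ≤ M * ((m : ℝ) / n) ^ a * N n v := hG m n hn hnm v
      _ ≤ M * 2 ^ a * N n v := by gcongr
      _ ≤ 2 ^ a * M * (1 + 2 * κ) * N n v := by nlinarith [mul_nonneg (mul_nonneg hM hv) hκ]
  · have hS : ∀ k, n < k → N k (((n : ℝ) / k) ^ a • coc A n k v) ≤ M * N n v := by
      intro k hk
      have hk0 : (0 : ℝ) < k := Nat.cast_pos.mpr (by omega)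
      have hinv : ((n : ℝ) / k) ^ a * ((k : ℝ) / n) ^ a = 1 := by
        rw [← Real.mul_rpow (by positivity) (by positivity), div_mul_div_cancel₀', div_self hk0.ne',
          Real.one_rpow]
        exact hn0.ne'
      rw [hN.apply_smul_of_nonneg (hn.trans hk.le) (by positivity)]
      calc ((n : ℝ) / k) ^ a * N k (coc A n k v)
          ≤ ((n : ℝ) / k) ^ a * (M * ((k : ℝ) / n) ^ a * N n v) := by
            gcongr
            exact hG k n hn hk.le v
        _ = M * N n v * (((n : ℝ) / k) ^ a * ((k : ℝ) / n) ^ a) := by ring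
        _ = M * N n v := by rw [hinv, mul_one]
    have hcoef := (inv_two_mul_rpow_le_sum_Ioc ha hn).trans
      (sum_le_sum_of_subset_of_nonneg (Ioc_subset_Ioc_right hm.le) fun k _ _ => by positivity)
    have h := (mul_le_mul_of_nonneg_right hcoef (hN.nonneg (hn.trans hnm) _)).trans
      (hP.sum_mul_le hN hn hnm (fun k => by positivity) hS)
    rw [inv_mul_le_iff₀ (by positivity)] at h
    nlinarith [mul_nonneg (mul_nonneg h2a.le hM) hv]

lemma PerronBounded.div_two_mul_le (hP : PerronBounded A N κ) (hN : NormFamily N) {C : ℝ}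
    (hC : CocBound A N 1 C) {n m j : ℕ} (hn : 1 ≤ n) (hm : 2 ^ j * n ≤ m) (v : X) :
    (j : ℝ) / 2 * N m (coc A n m v) ≤ κ * (C * N n v) := by
  have hnm : n ≤ m := (Nat.le_mul_of_pos_left n (by positivity)).trans hm
  have hS : ∀ k, n < k → N k ((1 : ℝ) • coc A n k v) ≤ C * N n v := fun k hk => by
    rw [one_smul]
    exact hC n k hn (by omega) v
  have hcoef : (j : ℝ) / 2 ≤ ∑ k ∈ Ioc n m, (k : ℝ)⁻¹ * 1 := by
    simp only [mul_one]
    exact (natCast_div_two_le_sum_Ioc_inv hn j).trans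
      (sum_le_sum_of_subset_of_nonneg (Ioc_subset_Ioc_right hm) fun k _ _ => by positivity)
  exact (mul_le_mul_of_nonneg_right hcoef (hN.nonneg (hn.trans hnm) _)).trans
    (hP.sum_mul_le hN hn hnm (fun _ => zero_le_one) hS)

-- For `J ≥ 4κC`, `div_two_mul_le` gives `(J/2) ‖𝓐(m,n)v‖_m ≤ (J/4) ‖v‖_n`.
lemma PerronBounded.cocBound_half (hP : PerronBounded A N κ) (hN : NormFamily N) {C : ℝ}
    (hC : CocBound A N 1 C) :
    CocBound A N (2 ^ (⌈4 * κ * C⌉₊ + 1)) 2⁻¹ := by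
  intro n m hn hm v
  set J := ⌈4 * κ * C⌉₊ + 1
  have h := hP.div_two_mul_le hN hC hn hm v
  have hJ : 4 * κ * C ≤ J := (Nat.le_ceil _).trans (by exact_mod_cast Nat.le_succ _)
  have hJ0 : (0 : ℝ) < J / 2 := by positivity
  have hv := hN.nonneg hn v
  refine le_of_mul_le_mul_left ?_ hJ0
  nlinarith

end Decay

theorem PerronBounded.exists_grow_neg {A : ℕ → X →L[ℝ] X} {N : ℕ → X → ℝ} {κ : ℝ}
    (hP : PerronBounded A N κ) (hN : NormFamily N) (hκ : 0 ≤ κ) {M a : ℝ} (hM : 0 < M)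
    (ha : 0 ≤ a) (hG : Grow A N M a) :
    ∃ D lam : ℝ, 0 < D ∧ 0 < lam ∧ Grow A N D (-lam) := by
  set C := 2 ^ a * M * (1 + 2 * κ)
  have hC0 : 0 < C := by positivity
  have hC : CocBound A N 1 C := hP.cocBound_one hN hκ hM.le ha hG
  set r := 2 ^ (⌈4 * κ * C⌉₊ + 1)
  have hr : 2 ≤ r := Nat.le_self_pow (by omega) 2
  have hr' : (1 : ℝ) < r := by exact_mod_cast hr
  have hdecay : ∀ j, CocBound A N (r ^ j) (C * 2⁻¹ ^ j) :=
    hC.pow hC0.le (hP.cocBound_half hN hC) (one_le_two.trans hr)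
  refine ⟨2 * C, Real.logb r 2, by positivity, Real.logb_pos hr' one_lt_two,
    fun m n hn hnm v => ?_⟩
  have hn0 : (0 : ℝ) < n := by exact_mod_cast hn
  have := le_two_mul_rpow_neg_logb (B := N m (coc A n m v)) hr' (one_le_natCast_div hn hnm)
    (mul_nonneg hC0.le (hN.nonneg hn v)) fun j hj => by
      have hj' : r ^ j * n ≤ m := by
        rw [le_div_iff₀ hn0] at hj
        exact_mod_cast hj
      linarith [hdecay j n m hn hj' v]
  linarith

/-- `(A_m)` admits a polynomial contraction with respect to the norms
`‖·‖_m` (i.e. a polynomial dichotomy with `P_m = Id`: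
`‖𝓐(m,n)x‖_m ≤ D(m/n)^{−λ}‖x‖_n` for all `m ≥ n`, `x ∈ X`) if and only if there are
`M, a > 0` with `‖𝓐(m,n)x‖_m ≤ M(m/n)^a‖x‖_n` for `m ≥ n`, and for each `y ∈ Y₀` the
sequence `x_n = ∑_{k=1}^n (1/k)𝓐(n,k)y_k` belongs to `Y₀`. -/
theorem stmt14 [CompleteSpace X] (A : ℕ → X →L[ℝ] X) (N : ℕ → X → ℝ)
    (hN : NormFamily N) :
    (∃ D lam : ℝ, 0 < D ∧ 0 < lam ∧
      ∀ m n, 1 ≤ n → n ≤ m → ∀ x : X,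
        N m (coc A n m x) ≤ D * (((m : ℝ) / (n : ℝ)) ^ (-lam)) * N n x) ↔
    ((∃ M a : ℝ, 0 < M ∧ 0 < a ∧ Grow A N M a) ∧
      ∀ y : ℕ → X, MemY0 N y →
        MemY0 N (fun n => ∑ k ∈ Finset.Icc 1 n, ((k : ℝ))⁻¹ • coc A k n (y k))) := by
  constructor
  · rintro ⟨D, lam, hD, hlam, h⟩
    have hgrow : Grow A N D (-lam) := h
    refine ⟨⟨D, lam, hD, hlam, hgrow.exponent_mono hN hD.le (by linarith)⟩, fun y hy => ?_⟩
    exact memY0_perronSum_of_grow hN hD.le (lt_min hlam one_pos) (min_le_right _ _)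
      (hgrow.exponent_mono hN hD.le (neg_le_neg (min_le_left _ _))) hy
  · rintro ⟨⟨M, a, hM, ha, hG⟩, hAdm⟩
    obtain ⟨κ, hκ, hP⟩ := exists_perronBounded hN hAdm
    exact hP.exists_grow_neg hN hκ hM ha.le hG
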